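/- For any two-layer single-input-channel zero-padding CNN f = C₂ ∘ σ ∘ C₁ on R^3 with kernel size 3, the quantity f₁(x,y,0) - f₂(0,x,y) depends only on x (not on y). Explicitly, f₁(x,y,0) - f₂(0,x,y) = -Σ_i b^i_{-1} σ(a^i_1 x + δ_i). -/

import Mathlib

/-- Zero-extension of a finite vector to an integer-indexed sequence. -/
def zpad (d : ℕ) (x : Fin d → ℝ) (m : ℤ) : ℝ :=
  if h : 0 ≤ m ∧ m < (d : ℤ) then x ⟨m.toNat, by omega⟩ else 0

/-- Zero padding convolution with kernel `w` supported on `[-k, k]`. -/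
noncomputable def zconv (d k : ℕ) (w : ℤ → ℝ) (x : Fin d → ℝ) (i : Fin d) : ℝ :=
  ∑ j ∈ Finset.Icc (-(k : ℤ)) (k : ℤ), w j * zpad d x ((i : ℤ) + j)

/-!
Zero-padding convolution commutes with shifts as long as no nonzero entry is pushed across the
boundary: `(0, x, y)` is the right shift of `(x, y, 0)`, so the hidden activations of `(0, x, y)` at
positions 1, 2 are those of `(x, y, 0)` at positions 0, 1. In `f₁(x,y,0) - f₂(0,x,y)` everything
therefore cancels except the term `b⁻₁ⁱ` times the hidden activation of `(0, x, y)` at position 0,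
which is `σ(a₁ⁱ x + δᵢ)` because the zero entry and the padding kill the other two taps.
-/

theorem zpad_of_lt_zero {d : ℕ} (x : Fin d → ℝ) {m : ℤ} (hm : m < 0) : zpad d x m = 0 :=
  dif_neg fun h => by omega

theorem zpad_of_le {d : ℕ} (x : Fin d → ℝ) {m : ℤ} (hm : (d : ℤ) ≤ m) : zpad d x m = 0 :=
  dif_neg fun h => by omega

theorem zpad_natCast {d : ℕ} (x : Fin d → ℝ) (i : Fin d) : zpad d x i = x i :=
  dif_pos ⟨by omega, by omega⟩

theorem zpad_cons_zero {d : ℕ} (v : Fin d → ℝ) (m : ℤ) :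
    zpad (d + 1) (Fin.cons 0 v) (m + 1) = zpad d v m := by
  rcases lt_trichotomy m (-1) with hm | rfl | hm
  · rw [zpad_of_lt_zero _ (by omega), zpad_of_lt_zero _ (by omega)]
  · simpa [zpad_of_lt_zero] using zpad_natCast (Fin.cons 0 v : Fin (d + 1) → ℝ) 0
  · by_cases hd : m < d
    · lift m to ℕ using by omega
      have hmd : m < d := by omega
      simpa using (zpad_natCast (Fin.cons 0 v : Fin (d + 1) → ℝ) (Fin.succ ⟨m, hmd⟩)).trans
        (zpad_natCast v ⟨m, hmd⟩).symm
    · rw [zpad_of_le _ (by push_cast; omega), zpad_of_le _ (by omega)]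

theorem zpad_snoc_zero {d : ℕ} (v : Fin d → ℝ) (m : ℤ) :
    zpad (d + 1) (Fin.snoc v 0) m = zpad d v m := by
  by_cases hm : 0 ≤ m ∧ m < d
  · lift m to ℕ using hm.1
    have hmd : m < d := by omega
    have := zpad_natCast (Fin.snoc v 0 : Fin (d + 1) → ℝ) (Fin.castSucc ⟨m, hmd⟩)
    rw [Fin.snoc_castSucc, ← zpad_natCast v] at this
    simpa using this
  · rcases not_and_or.mp hm with hneg | hge
    · rw [zpad_of_lt_zero _ (by omega), zpad_of_lt_zero _ (by omega)]
    · by_cases hd : m = d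
      · subst hd
        simpa [zpad_of_le] using zpad_natCast (Fin.snoc v 0 : Fin (d + 1) → ℝ) (Fin.last d)
      · rw [zpad_of_le _ (by push_cast; omega), zpad_of_le _ (by omega)]

theorem zconv_eq_of_zpad_shift {d k : ℕ} (w : ℤ → ℝ) {u v : Fin d → ℝ}
    (h : ∀ m, zpad d u (m + 1) = zpad d v m) {i j : Fin d} (hij : (j : ℤ) = i + 1) :
    zconv d k w u j = zconv d k w v i := by
  refine Finset.sum_congr rfl fun t _ => ?_
  rw [hij, add_right_comm, h]

theorem zconv_one {d : ℕ} (w : ℤ → ℝ) (x : Fin d → ℝ) (i : Fin d) :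
    zconv d 1 w x i = w (-1) * zpad d x (i - 1) + w 0 * x i + w 1 * zpad d x (i + 1) := by
  have : Finset.Icc (-((1 : ℕ) : ℤ)) ((1 : ℕ) : ℤ) = {-1, 0, 1} := by decide
  rw [zconv, this, Finset.sum_insert (by decide), Finset.sum_insert (by decide),
    Finset.sum_singleton, add_zero, zpad_natCast, sub_eq_add_neg, add_assoc]

theorem zconv_three_one_zero (w : ℤ → ℝ) (x : Fin 3 → ℝ) :
    zconv 3 1 w x 0 = w 0 * x 0 + w 1 * x 1 := by
  rw [zconv_one, zpad_of_lt_zero _ (by simp), ← zpad_natCast x 1]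
  norm_num

theorem zconv_three_one_one (w : ℤ → ℝ) (x : Fin 3 → ℝ) :
    zconv 3 1 w x 1 = w (-1) * x 0 + w 0 * x 1 + w 1 * x 2 := by
  rw [zconv_one, ← zpad_natCast x 0, ← zpad_natCast x 2]
  rfl

theorem zconv_three_one_sub_of_shift (w : ℤ → ℝ) {u u' : Fin 3 → ℝ} (h₁ : u' 1 = u 0)
    (h₂ : u' 2 = u 1) : zconv 3 1 w u 0 - zconv 3 1 w u' 1 = -(w (-1) * u' 0) := by
  rw [zconv_three_one_zero, zconv_three_one_one, h₁, h₂]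
  ring

theorem zpad_shift_vec_three (x y : ℝ) (m : ℤ) : zpad 3 ![0, x, y] (m + 1) = zpad 3 ![x, y, 0] m := by
  have hsnoc : ![x, y, 0] = Fin.snoc ![x, y] 0 := by
    ext i
    fin_cases i <;> rfl
  rw [hsnoc, zpad_snoc_zero]
  exact zpad_cons_zero ![x, y] m

theorem two_layer_diff_dep_only_x (σ : ℝ → ℝ) (n : ℕ)
    (am a0 a1 δ bm b0 b1 : Fin n → ℝ) (δ0 : ℝ) :
    ∀ x y : ℝ,
      (fun (v : Fin 3 → ℝ) (p : Fin 3) =>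
          (∑ i : Fin n,
            zconv 3 1 (fun j => if j = -1 then bm i else if j = 0 then b0 i
                else if j = 1 then b1 i else 0)
              (fun q => σ (zconv 3 1 (fun j => if j = -1 then am i else if j = 0 then a0 i
                  else if j = 1 then a1 i else 0) v q + δ i)) p) + δ0)
        ![x, y, 0] 0
      - (fun (v : Fin 3 → ℝ) (p : Fin 3) =>
          (∑ i : Fin n,
            zconv 3 1 (fun j => if j = -1 then bm i else if j = 0 then b0 i
                else if j = 1 then b1 i else 0)
              (fun q => σ (zconv 3 1 (fun j => if j = -1 then am i else if j = 0 then a0 i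
                  else if j = 1 then a1 i else 0) v q + δ i)) p) + δ0)
        ![0, x, y] 1
      = -∑ i : Fin n, bm i * σ (a1 i * x + δ i) := by
  intro x y
  simp only [add_sub_add_right_eq_sub, ← Finset.sum_sub_distrib, ← Finset.sum_neg_distrib]
  refine Finset.sum_congr rfl fun i _ => ?_
  rw [zconv_three_one_sub_of_shift _
      (by rw [zconv_eq_of_zpad_shift _ (zpad_shift_vec_three x y) (i := 0) (j := 1) rfl])
      (by rw [zconv_eq_of_zpad_shift _ (zpad_shift_vec_three x y) (i := 1) (j := 2) rfl]),
    zconv_three_one_zero]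
  simp
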